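/- For every integer M ≥ 0, the probabilists' Hermite polynomial He_M has exactly M real roots, all of them simple (i.e. He_M has M distinct real zeros and its degree is M). -/

import Mathlib

/-!
Since `He_n' = n He_{n-1}`, the recurrence reads `He_{n+1} = X He_n - He_n'`. Suppose `He_n` has
`n` simple real roots `r_1 < ⋯ < r_n`. The derivative of a monic polynomial with simple roots
alternates in sign along them and is positive at the largest, so `He_{n+1}(r_i) = -He_n'(r_i)`
alternates in sign and is negative at `r_n`. Adding a point `b > r_n`, where `He_{n+1}` is positive,
and `-b`, where parity gives `He_{n+1}(-b) = (-1)^(n+1) He_{n+1}(b)`, we get `n + 2` points of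
alternating sign, hence `n + 1` distinct real roots by the intermediate value theorem: all of
them, since `He_{n+1}` has degree `n + 1`.
-/

open Polynomial

/-- Probabilists' Hermite polynomials: He₀ = 1, He₁ = x,
    He_{n+1} = x·He_n − n·He_{n−1}. -/
noncomputable def He : ℕ → Polynomial ℝ
  | 0 => 1
  | 1 => Polynomial.X
  | (n + 2) => Polynomial.X * He (n + 1) - Polynomial.C ((n : ℝ) + 1) * He n

open Finset Filter

def AlternatesOn (p : ℝ[X]) (T : Finset ℝ) : Prop :=
  ∀ t ∈ T, 0 < (-1) ^ #{u ∈ T | t < u} * p.eval t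

theorem alternatesOn_insert_of_forall_lt {p : ℝ[X]} {S : Finset ℝ} {b : ℝ}
    (hb : ∀ t ∈ S, t < b) :
    AlternatesOn p (insert b S) ↔ 0 < p.eval b ∧ AlternatesOn (-p) S := by
  have hbS : b ∉ S := fun h => lt_irrefl b (hb b h)
  have above_b : {u ∈ insert b S | b < u} = ∅ := by
    refine filter_eq_empty_iff.2 fun u hu => ?_
    rcases mem_insert.1 hu with rfl | hu
    exacts [lt_irrefl u, (hb u hu).not_gt]
  have above_t : ∀ t ∈ S, #{u ∈ insert b S | t < u} = #{u ∈ S | t < u} + 1 := by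
    intro t ht
    rw [filter_insert, if_pos (hb t ht), card_insert_of_notMem (by simp [hbS])]
  simp only [AlternatesOn, forall_mem_insert, above_b, card_empty, pow_zero, one_mul]
  refine and_congr_right fun _ => forall₂_congr fun t ht => ?_
  rw [above_t t ht, pow_succ, eval_neg]
  ring_nf

theorem alternatesOn_insert_of_forall_gt {p : ℝ[X]} {S : Finset ℝ} {a : ℝ}
    (ha : ∀ t ∈ S, a < t) :
    AlternatesOn p (insert a S) ↔ 0 < (-1) ^ #S * p.eval a ∧ AlternatesOn p S := by
  have above_a : {u ∈ insert a S | a < u} = S := by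
    rw [filter_insert, if_neg (lt_irrefl a), filter_true_of_mem ha]
  have above_t : ∀ t ∈ S, {u ∈ insert a S | t < u} = {u ∈ S | t < u} := by
    intro t ht
    rw [filter_insert, if_neg (ha t ht).not_gt]
  simp only [AlternatesOn, forall_mem_insert, above_a]
  refine and_congr_right fun _ => forall₂_congr fun t ht => ?_
  rw [above_t t ht]

theorem exists_isRoot_mem_Ioo (p : ℝ[X]) {a b : ℝ} (hab : a < b) (ha : p.eval a < 0)
    (hb : 0 < p.eval b) : ∃ z ∈ Set.Ioo a b, p.IsRoot z :=
  intermediate_value_Ioo hab.le p.continuous.continuousOn ⟨ha, hb⟩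

theorem AlternatesOn.card_le_card_roots_lt_add_one {p : ℝ[X]} {T : Finset ℝ}
    (hp : AlternatesOn p T) {b : ℝ} (hb : ∀ t ∈ T, t ≤ b) :
    #T ≤ #{z ∈ p.roots.toFinset | z < b} + 1 := by
  induction T using Finset.induction_on_max generalizing p b with
  | empty => simp
  | insert m T hm ih =>
    obtain ⟨hpm, hpT⟩ := (alternatesOn_insert_of_forall_lt hm).1 hp
    rw [card_insert_of_notMem fun h => lt_irrefl m (hm m h), add_le_add_iff_right]
    obtain rfl | hne := T.eq_empty_or_nonempty
    · exact Nat.zero_le _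
    set m' := T.max' hne
    have hm'm : m' < m := hm m' (T.max'_mem hne)
    have hpm' : p.eval m' < 0 := by
      have above_m' : {u ∈ T | m' < u} = ∅ :=
        filter_eq_empty_iff.2 fun u hu => not_lt.2 (T.le_max' u hu)
      simpa [above_m'] using hpT m' (T.max'_mem hne)
    -- the new root lies above every root found for `T` and `-p`
    obtain ⟨z, ⟨hm'z, hzm⟩, hz⟩ := exists_isRoot_mem_Ioo p hm'm hpm' hpm
    have hp0 : p ≠ 0 := fun h => by simp [h] at hpm
    have hmb : m ≤ b := hb m (mem_insert_self m T)
    calc #T ≤ #{z ∈ (-p).roots.toFinset | z < m'} + 1 := ih hpT fun t ht => T.le_max' t ht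
      _ = #(insert z {z ∈ p.roots.toFinset | z < m'}) := by
        rw [roots_neg, card_insert_of_notMem (by simp [hm'z.not_gt])]
      _ ≤ #{z ∈ p.roots.toFinset | z < b} := by
        refine card_le_card (insert_subset_iff.2 ⟨?_, fun y hy => ?_⟩)
        · simp [hp0, hz.eq_zero, hzm.trans_le hmb]
        · simp only [mem_filter] at hy ⊢
          exact ⟨hy.1, hy.2.trans (hm'm.trans_le hmb)⟩

theorem AlternatesOn.card_le_card_roots_add_one {p : ℝ[X]} {T : Finset ℝ}
    (hp : AlternatesOn p T) : #T ≤ #p.roots.toFinset + 1 := by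
  obtain ⟨b, hb⟩ := T.bddAbove
  exact (hp.card_le_card_roots_lt_add_one hb).trans (Nat.add_le_add_right (card_filter_le _ _) 1)

theorem alternatesOn_derivative_prod_X_sub_C (S : Finset ℝ) :
    AlternatesOn (derivative (∏ u ∈ S, (X - C u))) S := by
  intro t ht
  have hval : (derivative (∏ u ∈ S, (X - C u))).eval t = ∏ u ∈ S.erase t, (t - u) := by
    simpa [Lagrange.nodal_eq, eval_prod] using
      Lagrange.eval_nodal_derivative_eval_node_eq (v := id) ht
  have above_t : {u ∈ S | t < u} = {u ∈ S.erase t | t < u} := by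
    rw [filter_erase, erase_eq_of_notMem (by simp)]
  rw [hval, above_t, ← prod_filter_mul_prod_filter_not (S.erase t) (t < ·), ← mul_assoc,
    ← prod_neg]
  refine mul_pos (prod_pos fun u hu => ?_) (prod_pos fun u hu => ?_)
  · simpa using (mem_filter.1 hu).2
  · obtain ⟨hu, hut⟩ := mem_filter.1 hu
    exact sub_pos.2 (lt_of_le_of_ne (not_lt.1 hut) (ne_of_mem_erase hu))

theorem Polynomial.card_roots_eq_natDegree_and_nodup {R : Type*} [CommRing R] [IsDomain R]
    [DecidableEq R] {p : R[X]} (h : p.natDegree ≤ #p.roots.toFinset) :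
    Multiset.card p.roots = p.natDegree ∧ p.roots.Nodup := by
  have hle : #p.roots.toFinset ≤ Multiset.card p.roots := Multiset.toFinset_card_le _
  have hcard := card_roots' p
  exact ⟨by omega, Multiset.toFinset_card_eq_card_iff_nodup.1 (by omega)⟩

theorem Polynomial.Monic.prod_X_sub_C_roots_toFinset {R : Type*} [CommRing R] [IsDomain R]
    [DecidableEq R] {p : R[X]} (hp : p.Monic)
    (hcard : Multiset.card p.roots = p.natDegree) (hnodup : p.roots.Nodup) :
    ∏ u ∈ p.roots.toFinset, (X - C u) = p := by
  rw [prod_eq_multiset_prod, Multiset.toFinset_val, hnodup.dedup]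
  exact prod_multiset_X_sub_C_of_monic_of_roots_card_eq hp hcard

theorem He_succ_succ (n : ℕ) : He (n + 2) = X * He (n + 1) - C ((n : ℝ) + 1) * He n := rfl

theorem derivative_He_succ : ∀ n : ℕ, derivative (He (n + 1)) = C ((n : ℝ) + 1) * He n
  | 0 => by simp [He]
  | 1 => by simp [He, add_mul]
  | n + 2 => by
    rw [He_succ_succ, derivative_sub, derivative_mul, derivative_X, derivative_C_mul,
      derivative_He_succ (n + 1), derivative_He_succ n, He_succ_succ n]
    simp only [Nat.cast_add, Nat.cast_ofNat, map_add, map_natCast, map_one, map_ofNat]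
    ring

theorem He_succ (n : ℕ) : He (n + 1) = X * He n - derivative (He n) := by
  cases n with
  | zero => simp [He]
  | succ n => rw [derivative_He_succ, He_succ_succ]

theorem He_eq_map_hermite (n : ℕ) : He n = (hermite n).map (Int.castRingHom ℝ) := by
  induction n with
  | zero => simp [He]
  | succ n ih =>
    rw [He_succ, hermite_succ, ih, Polynomial.map_sub, Polynomial.map_mul, map_X, derivative_map]

theorem monic_He (n : ℕ) : (He n).Monic :=
  He_eq_map_hermite n ▸ (hermite_monic n).map _

theorem natDegree_He (n : ℕ) : (He n).natDegree = n := by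
  rw [He_eq_map_hermite, (hermite_monic n).natDegree_map, natDegree_hermite]

theorem eval_neg_He : ∀ (n : ℕ) (x : ℝ), (He n).eval (-x) = (-1) ^ n * (He n).eval x
  | 0, _ => by simp [He]
  | 1, _ => by simp [He]
  | n + 2, x => by
    simp only [He_succ_succ, eval_sub, eval_mul, eval_X, eval_C, eval_neg_He (n + 1),
      eval_neg_He n]
    ring

theorem tendsto_eval_He_succ_atTop (n : ℕ) :
    Tendsto (fun x => (He (n + 1)).eval x) atTop atTop := by
  refine tendsto_atTop_of_leadingCoeff_nonneg _ ?_ ((monic_He _).leadingCoeff ▸ zero_le_one)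
  rw [degree_eq_natDegree (monic_He _).ne_zero, natDegree_He]
  exact_mod_cast n.succ_pos

theorem exists_alternatesOn_He_succ {n : ℕ} (hcard : Multiset.card (He n).roots = n)
    (hnodup : (He n).roots.Nodup) :
    ∃ T : Finset ℝ, #T = n + 2 ∧ AlternatesOn (He (n + 1)) T := by
  set S := (He n).roots.toFinset
  have hS : ∏ u ∈ S, (X - C u) = He n :=
    (monic_He n).prod_X_sub_C_roots_toFinset (by rw [natDegree_He, hcard]) hnodup
  have hcardS : #S = n := by rw [Multiset.toFinset_card_of_nodup hnodup, hcard]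
  have halt_S : AlternatesOn (-He (n + 1)) S := by
    intro t ht
    have hroot : (He n).eval t = 0 := isRoot_of_mem_roots (Multiset.mem_toFinset.1 ht)
    simpa [He_succ, hroot, hS] using alternatesOn_derivative_prod_X_sub_C S t ht
  obtain ⟨b, hb_pos, hb_eval, hb_abs⟩ := ((eventually_gt_atTop 0).and
    (((tendsto_eval_He_succ_atTop n).eventually_gt_atTop 0).and
      ((eventually_all_finset S).2 fun t _ => eventually_gt_atTop |t|))).exists
  have hbS : ∀ t ∈ S, t < b := fun t ht => (le_abs_self t).trans_lt (hb_abs t ht)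
  have hbS' : ∀ t ∈ insert b S, -b < t := by
    simp only [mem_insert, forall_eq_or_imp]
    exact ⟨by linarith, fun t ht => neg_lt_of_abs_lt (hb_abs t ht)⟩
  refine ⟨insert (-b) (insert b S), ?_, ?_⟩
  · rw [card_insert_of_notMem fun h => lt_irrefl _ (hbS' _ h),
      card_insert_of_notMem fun h => lt_irrefl _ (hbS _ h), hcardS]
  refine (alternatesOn_insert_of_forall_gt hbS').2
    ⟨?_, (alternatesOn_insert_of_forall_lt hbS).2 ⟨hb_eval, halt_S⟩⟩
  rw [card_insert_of_notMem fun h => lt_irrefl _ (hbS _ h), hcardS, eval_neg_He, ← mul_assoc,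
    ← pow_add, Even.neg_one_pow ⟨_, rfl⟩, one_mul]
  exact hb_eval

theorem card_roots_He_and_nodup (n : ℕ) :
    Multiset.card (He n).roots = n ∧ (He n).roots.Nodup := by
  induction n with
  | zero => simp [He]
  | succ n ih =>
    obtain ⟨T, hT, halt⟩ := exists_alternatesOn_He_succ ih.1 ih.2
    have hroots := halt.card_le_card_roots_add_one
    have h := card_roots_eq_natDegree_and_nodup (p := He (n + 1)) (by rw [natDegree_He]; omega)
    rwa [natDegree_He] at h

/-- He_M has degree M and exactly M real roots, all simple: its multiset of
    real roots has cardinality M and no duplicates. -/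
theorem hermite_real_simple_roots (M : ℕ) :
    (He M).natDegree = M ∧
    Multiset.card (He M).roots = M ∧
    (He M).roots.Nodup :=
  ⟨natDegree_He M, card_roots_He_and_nodup M⟩
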